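/- If q ∈ 𝕀 is primitive, then there exists a quaternion z ∈ 𝕀 with tr(qz̄) = 1. -/

import Mathlib

/-! The coordinates `c₁, …, c₄` of `q` in the `𝔬`-basis `e₁, …, e₄` of `𝕀` generate an ideal
of `𝔬 = ℤ[τ]`. This ring is Euclidean for `|N|`, so the ideal is principal, say `(g)`. Then
`g⁻¹ q ∈ 𝕀`, and primitivity makes `g` a unit: `∑ aᵢ cᵢ = 1` for some `aᵢ ∈ 𝔬`. The basis
`w₁, …, w₄` dual to `e₁, …, e₄` for `(x, y) ↦ tr (x ȳ)` lies in `𝕀`, so `z = ∑ aᵢ wᵢ` works. -/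

noncomputable section

open Quaternion Classical

/-- √5 as a real number. -/
def sqrt5 : ℝ := Real.sqrt 5

/-- The golden ratio τ = (1+√5)/2. -/
def gold : ℝ := (1 + sqrt5) / 2

/-- membership in K = ℚ(√5) ⊆ ℝ. -/
def inK (x : ℝ) : Prop := ∃ a b : ℚ, x = (a : ℝ) + (b : ℝ) * sqrt5

/-- The nontrivial field automorphism of K = ℚ(√5) (√5 ↦ -√5), extended by the
identity outside K.  Since `1, √5` are linearly independent over ℚ, the rational
coordinates of an element of K are unique, so this is well defined. -/
noncomputable def conjK (x : ℝ) : ℝ :=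
  if h : ∃ a b : ℚ, x = (a : ℝ) + (b : ℝ) * sqrt5 then
    (h.choose : ℝ) - (h.choose_spec.choose : ℝ) * sqrt5
  else x

/-- membership in 𝔬 = ℤ[τ], the ring of integers of ℚ(√5). -/
def inO (x : ℝ) : Prop := ∃ m n : ℤ, x = (m : ℝ) + (n : ℝ) * gold

/-- The twist map (a,b,c,d) ↦ (a',b',d',c') on quaternions. -/
noncomputable def twist (q : ℍ[ℝ]) : ℍ[ℝ] :=
  ⟨conjK q.re, conjK q.imI, conjK q.imK, conjK q.imJ⟩

/-- reduced norm nr(q) = q q̄ (as a real number). -/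
def nr (q : ℍ[ℝ]) : ℝ := (q * star q).re

/-- reduced trace tr(q) = q + q̄ (as a real number). -/
def trq (q : ℍ[ℝ]) : ℝ := (q + star q).re

/-- generators of the icosian ring. -/
def e₁ : ℍ[ℝ] := ⟨1, 0, 0, 0⟩
def e₂ : ℍ[ℝ] := ⟨0, 1, 0, 0⟩
def e₃ : ℍ[ℝ] := ⟨1/2, 1/2, 1/2, 1/2⟩
def e₄ : ℍ[ℝ] := ⟨(1 - gold)/2, gold/2, 0, 1/2⟩

/-- membership in the icosian ring 𝕀, the 𝔬-span of the four generators. -/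
def inI (q : ℍ[ℝ]) : Prop :=
  ∃ c₁ c₂ c₃ c₄ : ℝ, inO c₁ ∧ inO c₂ ∧ inO c₃ ∧ inO c₄ ∧
    q = c₁ • e₁ + c₂ • e₂ + c₃ • e₃ + c₄ • e₄

/-- generators of the copy L of the root lattice A₄. -/
def g₁ : ℍ[ℝ] := ⟨1, 0, 0, 0⟩
def g₂ : ℍ[ℝ] := ⟨-1/2, 1/2, 1/2, 1/2⟩
def g₃ : ℍ[ℝ] := ⟨0, -1, 0, 0⟩
def g₄ : ℍ[ℝ] := ⟨0, 1/2, (gold - 1)/2, -gold/2⟩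

/-- L, the ℤ-span of the four generators, as an additive subgroup of ℍ(ℝ). -/
def Lgrp : AddSubgroup ℍ[ℝ] := AddSubgroup.closure {g₁, g₂, g₃, g₄}

/-- `q` is a primitive icosian. -/
def PrimitiveIcosian (q : ℍ[ℝ]) : Prop :=
  inI q ∧ ∀ α : ℝ, inK α → inI (α • q) → inO α

/-- `q` is admissible with |q q̃| = n. -/
def Admissible (q : ℍ[ℝ]) (n : ℕ) : Prop :=
  nr q * conjK (nr q) = (n : ℝ) ^ 2

/-- The additive map x ↦ r • (q x q̃) on ℍ(ℝ). -/
noncomputable def rotHom (q : ℍ[ℝ]) (r : ℝ) : ℍ[ℝ] →+ ℍ[ℝ] where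
  toFun x := r • (q * x * twist q)
  map_zero' := by simp
  map_add' x y := by
    simp [mul_add, add_mul, smul_add]

/-- Commensurateness of two additive subgroups of ℍ(ℝ). -/
def Commensurate (A B : AddSubgroup ℍ[ℝ]) : Prop :=
  (A ⊓ B).relIndex A ≠ 0 ∧ (A ⊓ B).relIndex B ≠ 0

/-- Image of an additive subgroup under a linear isometry of ℍ(ℝ) ≅ ℝ⁴. -/
def mapIso (R : ℍ[ℝ] ≃ₗᵢ[ℝ] ℍ[ℝ]) (A : AddSubgroup ℍ[ℝ]) : AddSubgroup ℍ[ℝ] :=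
  A.map (R.toLinearEquiv.toLinearMap.toAddMonoidHom)

/-- `R` lies in SO(4,ℝ). -/
def IsRotation (R : ℍ[ℝ] ≃ₗᵢ[ℝ] ℍ[ℝ]) : Prop :=
  LinearMap.det (R.toLinearEquiv.toLinearMap) = 1

lemma gold_eq_goldenRatio : gold = Real.goldenRatio := rfl

lemma gold_sq : gold ^ 2 = gold + 1 := gold_eq_goldenRatio ▸ Real.goldenRatio_sq

lemma Int.exists_two_mul_abs_sub_mul_le (a : ℤ) {n : ℤ} (hn : n ≠ 0) :
    ∃ k : ℤ, 2 * |a - n * k| ≤ |n| := by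
  refine ⟨round ((a : ℚ) / n), ?_⟩
  have hn' : (n : ℚ) ≠ 0 := by exact_mod_cast hn
  have key : ((2 * |a - n * round ((a : ℚ) / n)| : ℤ) : ℚ) ≤ |(n : ℚ)| :=
    calc ((2 * |a - n * round ((a : ℚ) / n)| : ℤ) : ℚ)
        = 2 * |(n : ℚ)| * |(a : ℚ) / n - round ((a : ℚ) / n)| := by
          push_cast
          rw [mul_assoc, ← abs_mul, mul_sub, mul_div_cancel₀ _ hn']
      _ ≤ 2 * |(n : ℚ)| * (1 / 2) := by gcongr; exact abs_sub_round _
      _ = |(n : ℚ)| := by ring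
  exact_mod_cast key

lemma Ideal.span_range_eq_top_of_forall_dvd_isUnit {R ι : Type*} [CommRing R]
    [IsPrincipalIdealRing R] {c : ι → R} (h : ∀ g, (∀ i, g ∣ c i) → IsUnit g) :
    Ideal.span (Set.range c) = ⊤ := by
  rw [← Ideal.span_singleton_generator (Ideal.span (Set.range c)), Ideal.span_singleton_eq_top]
  exact h _ fun i => (Submodule.IsPrincipal.mem_iff_generator_dvd _).1 (Ideal.subset_span ⟨i, rfl⟩)

/-- The ring `𝔬 = ℤ[τ]`, realised as `ℤ[ω]` with `ω² = 1 + ω`; `GoldenInt.toReal` sends `ω` to `τ`. -/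
abbrev GoldenInt := QuadraticAlgebra ℤ 1 1

namespace GoldenInt

def toReal : GoldenInt →ₐ[ℤ] ℝ :=
  QuadraticAlgebra.lift ⟨gold, by rw [one_smul, one_smul, ← sq, gold_sq, add_comm]⟩

lemma toReal_apply (z : GoldenInt) : toReal z = z.re + z.im * gold := by
  simp [toReal, zsmul_eq_mul]

lemma toReal_injective : Function.Injective toReal := by
  refine (injective_iff_map_eq_zero toReal).2 fun z hz => ?_
  rw [toReal_apply] at hz
  have him : z.im = 0 := by
    by_contra h
    have h' : (z.im : ℝ) ≠ 0 := by exact_mod_cast h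
    refine Real.goldenRatio_irrational ⟨-z.re / z.im, ?_⟩
    rw [Rat.cast_div, Rat.cast_neg, Rat.cast_intCast, Rat.cast_intCast, div_eq_iff h',
      ← gold_eq_goldenRatio]
    linarith
  ext <;> simp_all

lemma inO_iff_mem_range {x : ℝ} : inO x ↔ x ∈ Set.range toReal :=
  ⟨fun ⟨m, n, h⟩ => ⟨⟨m, n⟩, by rw [h, toReal_apply]⟩,
    fun ⟨z, h⟩ => ⟨z.re, z.im, by rw [← h, toReal_apply]⟩⟩

lemma not_inO_half : ¬ inO (1 / 2) := by
  rintro ⟨m, n, h⟩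
  have h2 : toReal ⟨2 * m, 2 * n⟩ = toReal 1 := by
    rw [toReal_apply, map_one]
    push_cast
    linarith
  have := congrArg QuadraticAlgebra.re (toReal_injective h2)
  simp only [QuadraticAlgebra.re_one] at this
  omega

lemma toReal_mul_star (z : GoldenInt) : toReal z * toReal (star z) = z.norm := by
  rw [← map_mul, ← QuadraticAlgebra.algebraMap_norm_eq_mul_star, AlgHom.commutes]
  rfl

lemma norm_ne_zero {z : GoldenInt} (hz : z ≠ 0) : z.norm ≠ 0 := by
  intro h
  have h' := toReal_mul_star z
  rw [h, Int.cast_zero, mul_eq_zero, ← map_zero toReal] at h'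
  rcases h' with h' | h'
  · exact hz (toReal_injective h')
  · exact hz (star_eq_zero.1 (toReal_injective h'))

lemma inK_inv_toReal (z : GoldenInt) : inK (toReal z)⁻¹ := by
  refine ⟨(z.re + z.im / 2) / z.norm, -(z.im / 2) / z.norm, ?_⟩
  rcases eq_or_ne z 0 with rfl | hz
  · simp
  have hn : (z.norm : ℝ) ≠ 0 := by exact_mod_cast norm_ne_zero hz
  have hz' : toReal z ≠ 0 := (map_ne_zero_iff _ toReal_injective).2 hz
  have key : (toReal z)⁻¹ = toReal (star z) / z.norm := by
    rw [eq_div_iff hn, ← toReal_mul_star, inv_mul_cancel_left₀ hz']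
  rw [key, toReal_apply, QuadraticAlgebra.re_star, QuadraticAlgebra.im_star, gold]
  push_cast
  field_simp
  ring

lemma four_mul_abs_norm_le {z : GoldenInt} {n : ℤ} (hre : 2 * |z.re| ≤ |n|)
    (him : 2 * |z.im| ≤ |n|) : 4 * |z.norm| ≤ 3 * (|n| * |n|) := by
  have h : |z.norm| ≤ |z.re| * |z.re| + |z.re| * |z.im| + |z.im| * |z.im| := by
    rw [QuadraticAlgebra.norm_def, one_mul, one_mul]
    calc |z.re * z.re + z.re * z.im - z.im * z.im|
        ≤ |z.re * z.re| + |z.re * z.im| + |z.im * z.im| := by grw [abs_sub, abs_add_le]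
      _ = _ := by simp only [abs_mul]
  nlinarith [abs_nonneg z.re, abs_nonneg z.im]

/-- Round the coordinates of `x ȳ / N(y)` to get the quotient `k`: then
`(x - y k) ȳ` has coordinates at most `|N(y)| / 2`, so `|N(x - y k)| ≤ 3 |N(y)| / 4`. -/
lemma exists_natAbs_norm_sub_mul_lt (x : GoldenInt) {y : GoldenInt} (hy : y ≠ 0) :
    ∃ k, (x - y * k).norm.natAbs < y.norm.natAbs := by
  have hn := norm_ne_zero hy
  obtain ⟨k₁, hk₁⟩ := Int.exists_two_mul_abs_sub_mul_le (x * star y).re hn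
  obtain ⟨k₂, hk₂⟩ := Int.exists_two_mul_abs_sub_mul_le (x * star y).im hn
  refine ⟨⟨k₁, k₂⟩, ?_⟩
  have hmul : (x - y * ⟨k₁, k₂⟩) * star y
      = ⟨(x * star y).re - y.norm * k₁, (x * star y).im - y.norm * k₂⟩ := by
    rw [sub_mul, mul_right_comm, ← QuadraticAlgebra.algebraMap_norm_eq_mul_star]
    ext <;> simp
  have hbound := four_mul_abs_norm_le (z := ⟨_, _⟩) hk₁ hk₂
  rw [← hmul, map_mul, QuadraticAlgebra.norm_star, abs_mul] at hbound
  have hpos : 0 < |y.norm| := abs_pos.2 hn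
  zify
  nlinarith

lemma natAbs_norm_le_natAbs_norm_mul (x : GoldenInt) {y : GoldenInt} (hy : y ≠ 0) :
    x.norm.natAbs ≤ (x * y).norm.natAbs := by
  rw [map_mul, Int.natAbs_mul]
  exact Nat.le_mul_of_pos_right _ (Int.natAbs_pos.2 (norm_ne_zero hy))

def quo (x y : GoldenInt) : GoldenInt :=
  if hy : y = 0 then 0 else (exists_natAbs_norm_sub_mul_lt x hy).choose

instance : EuclideanDomain GoldenInt where
  quotient := quo
  quotient_zero x := dif_pos rfl
  remainder x y := x - y * quo x y
  quotient_mul_add_remainder_eq x y := add_sub_cancel _ _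
  r := InvImage (· < ·) fun z => z.norm.natAbs
  r_wellFounded := InvImage.wf _ wellFounded_lt
  remainder_lt x y hy := by
    simp only [InvImage, quo, dif_neg hy]
    exact (exists_natAbs_norm_sub_mul_lt x hy).choose_spec
  mul_left_not_lt x y hy := not_lt.2 (natAbs_norm_le_natAbs_norm_mul x hy)

end GoldenInt

open GoldenInt

def icosianBasis : Fin 4 → ℍ[ℝ] := ![e₁, e₂, e₃, e₄]

lemma inI_iff {q : ℍ[ℝ]} :
    inI q ↔ ∃ c : Fin 4 → GoldenInt, q = ∑ i, toReal (c i) • icosianBasis i := by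
  simp only [inI, inO_iff_mem_range, Fin.sum_univ_four, icosianBasis]
  constructor
  · rintro ⟨_, _, _, _, ⟨c₁, rfl⟩, ⟨c₂, rfl⟩, ⟨c₃, rfl⟩, ⟨c₄, rfl⟩, rfl⟩
    exact ⟨![c₁, c₂, c₃, c₄], rfl⟩
  · rintro ⟨c, rfl⟩
    exact ⟨_, _, _, _, ⟨c 0, rfl⟩, ⟨c 1, rfl⟩, ⟨c 2, rfl⟩, ⟨c 3, rfl⟩, rfl⟩

lemma inI_zero : inI 0 := inI_iff.2 ⟨0, by simp⟩

lemma inI_add {x y : ℍ[ℝ]} (hx : inI x) (hy : inI y) : inI (x + y) := by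
  obtain ⟨c, rfl⟩ := inI_iff.1 hx
  obtain ⟨d, rfl⟩ := inI_iff.1 hy
  exact inI_iff.2 ⟨c + d, by simp [add_smul, Finset.sum_add_distrib]⟩

lemma inI_smul (a : GoldenInt) {x : ℍ[ℝ]} (hx : inI x) : inI (toReal a • x) := by
  obtain ⟨c, rfl⟩ := inI_iff.1 hx
  exact inI_iff.2 ⟨a • c, by simp [Finset.smul_sum, smul_smul]⟩

def w₁ : ℍ[ℝ] := ⟨1/2, 0, -gold/2, (gold - 1)/2⟩
def w₂ : ℍ[ℝ] := ⟨0, 1/2, (gold - 1)/2, -gold/2⟩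
def w₃ : ℍ[ℝ] := ⟨0, 0, 1, 0⟩
def w₄ : ℍ[ℝ] := ⟨0, 0, -1, 1⟩

/-- The basis dual to `icosianBasis` for the trace form `(x, y) ↦ tr (x ȳ)`. -/
def icosianDual : Fin 4 → ℍ[ℝ] := ![w₁, w₂, w₃, w₄]

lemma trq_sum_mul_star_sum_icosianDual (c d : Fin 4 → ℝ) :
    trq ((∑ i, c i • icosianBasis i) * star (∑ i, d i • icosianDual i)) = ∑ i, c i * d i := by
  simp [trq, Fin.sum_univ_four, icosianBasis, icosianDual, Quaternion.re_mul, smul_eq_mul]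
  simp [e₁, e₂, e₃, e₄, w₁, w₂, w₃, w₄]
  ring

/-- The coordinates of `icosianDual` in `icosianBasis`; `⟨m, n⟩` stands for `m + n τ`. -/
def icosianDualCoord : Fin 4 → Fin 4 → GoldenInt :=
  ![![⟨2, 0⟩, ⟨-1, 0⟩, ⟨0, -1⟩, ⟨-1, 2⟩],
    ![⟨-1, 0⟩, ⟨2, 0⟩, ⟨-1, 1⟩, ⟨1, -2⟩],
    ![⟨0, -1⟩, ⟨-1, 1⟩, ⟨2, 0⟩, ⟨-2, 0⟩],
    ![⟨-1, 2⟩, ⟨1, -2⟩, ⟨-2, 0⟩, ⟨4, 0⟩]]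

lemma icosianDual_eq_sum (i : Fin 4) :
    icosianDual i = ∑ j, toReal (icosianDualCoord i j) • icosianBasis j := by
  fin_cases i <;> ext <;>
    simp [Fin.sum_univ_four, icosianBasis, icosianDual, icosianDualCoord, toReal_apply,
      smul_eq_mul] <;>
    simp [e₁, e₂, e₃, e₄, w₁, w₂, w₃, w₄] <;> linarith [gold_sq]

lemma inI_sum_smul_icosianDual (a : Fin 4 → GoldenInt) :
    inI (∑ i, toReal (a i) • icosianDual i) :=
  Finset.sum_induction _ inI (fun _ _ => inI_add) inI_zero
    fun i _ => inI_smul (a i) (inI_iff.2 ⟨_, icosianDual_eq_sum i⟩)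

lemma PrimitiveIcosian.ne_zero {q : ℍ[ℝ]} (hq : PrimitiveIcosian q) : q ≠ 0 := by
  rintro rfl
  exact not_inO_half (hq.2 _ ⟨1 / 2, 0, by simp⟩ (by rw [smul_zero]; exact inI_zero))

lemma PrimitiveIcosian.isUnit_of_forall_dvd {q : ℍ[ℝ]} (hq : PrimitiveIcosian q)
    {c : Fin 4 → GoldenInt} (hc : q = ∑ i, toReal (c i) • icosianBasis i) {g : GoldenInt}
    (hg : ∀ i, g ∣ c i) : IsUnit g := by
  choose k hk using hg
  have hg0 : toReal g ≠ 0 := by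
    intro hg0
    exact hq.ne_zero (by simp [hc, hk, hg0])
  have hI : inI ((toReal g)⁻¹ • q) :=
    inI_iff.2 ⟨k, by simp [hc, hk, Finset.smul_sum, smul_smul, inv_mul_cancel_left₀ hg0]⟩
  obtain ⟨u, hu⟩ := inO_iff_mem_range.1 (hq.2 _ (inK_inv_toReal g) hI)
  refine IsUnit.of_mul_eq_one u (toReal_injective ?_)
  rw [map_mul, hu, map_one, mul_inv_cancel₀ hg0]

theorem exists_trace_one_of_primitive (q : ℍ[ℝ]) (hprim : PrimitiveIcosian q) :
    ∃ z : ℍ[ℝ], inI z ∧ trq (q * star z) = 1 := by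
  obtain ⟨c, hc⟩ := inI_iff.1 hprim.1
  have hspan : Ideal.span (Set.range c) = ⊤ :=
    Ideal.span_range_eq_top_of_forall_dvd_isUnit fun _ => hprim.isUnit_of_forall_dvd hc
  obtain ⟨a, ha⟩ := Ideal.mem_span_range_iff_exists_fun.1 (Ideal.eq_top_iff_one _ |>.1 hspan)
  refine ⟨∑ i, toReal (a i) • icosianDual i, inI_sum_smul_icosianDual a, ?_⟩
  rw [hc, trq_sum_mul_star_sum_icosianDual, ← map_one toReal, ← ha, map_sum]
  simp only [map_mul, mul_comm]

end
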